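/- arXiv:2010.09974 — 3 statements merged into one kernel-verified Lean document; each statement's English description precedes it below -/
import Mathlib

section
/- Let t have a maximal suffix γ with respect to α (t = t'·γ, α ⊑ t', and γ is the longest such suffix). Then for any pattern δ, α·δ ⊑ t if and only if δ ⊑ γ. -/
/-- If γ is the maximal suffix of t with respect to α, then α·δ ⊑ t ↔ δ ⊑ γ. -/
theorem maximal_suffix_projection {E : Type*} (α t t' γ : List E)
    (hdecomp : t = t' ++ γ) (hα : α.Sublist t')
    (hmax : ∀ t'' γ' : List E, t = t'' ++ γ' → α.Sublist t'' → γ'.length ≤ γ.length) :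
    ∀ δ : List E, (α ++ δ).Sublist t ↔ δ.Sublist γ := by
  intro δ
  constructor
  · intro h
    rw [List.append_sublist_iff] at h
    obtain ⟨s₁, s₂, ht, h₁, h₂⟩ := h
    have hlen : s₂.length ≤ γ.length := hmax s₁ s₂ ht h₁
    have hs₂ : s₂ <:+ γ := by
      refine List.suffix_of_suffix_length_le ⟨s₁, ht.symm⟩ ⟨t', hdecomp.symm⟩ hlen
    exact h₂.trans hs₂.sublist
  · intro h
    rw [hdecomp]
    exact hα.append h
end

section
/- For patterns α, δ and a finite set of traces S where every trace in S contains α, the support of α·δ in S equals the support of δ in the α-projected database S|_α (the set of maximal suffixes of traces in S with respect to α). -/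
/-- Support of α·δ in S equals support of δ in the α-projected database S|_α,
    where every trace in S contains α and f maps each trace to its maximal
    suffix with respect to α. -/
theorem support_projected_database {E : Type*} [DecidableEq E] (α δ : List E)
    (S : Multiset (List E)) (f : List E → List E)
    (hall : ∀ t ∈ S, α.Sublist t)
    (hf : ∀ t ∈ S, ∃ t' : List E, t = t' ++ f t ∧ α.Sublist t' ∧
      ∀ t'' γ : List E, t = t'' ++ γ → α.Sublist t'' → γ.length ≤ (f t).length) :
    (S.filter (fun t => (α ++ δ).Sublist t)).card
      = ((S.map f).filter (fun t => δ.Sublist t)).card := by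
  rw [Multiset.filter_map, Multiset.card_map]
  congr 1
  apply Multiset.filter_congr
  intro t ht
  obtain ⟨t', heq, hαt', hmax⟩ := hf t ht
  simp only [Function.comp]
  constructor
  · intro h
    obtain ⟨r₁, r₂, hr, h₁, h₂⟩ := List.append_sublist_iff.mp h
    have hlen : r₂.length ≤ (f t).length := hmax r₁ r₂ hr h₁
    have hsfx : r₂ <:+ f t :=
      List.suffix_of_suffix_length_le ⟨r₁, hr.symm⟩ ⟨t', heq.symm⟩ hlen
    exact h₂.trans hsfx.sublist
  · intro h
    rw [heq]
    exact List.Sublist.append hαt' h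
end

section
/- The Jaccard distance d(A,B) = 1 − |A∩B|/|A∪B| on finite sets satisfies the triangle inequality: d(A,C) ≤ d(A,B) + d(B,C). -/
/-!
Put `U = A ∪ B ∪ C` and use `d(X, Y) = |X ∆ Y| / |X ∪ Y|`. Enlarging denominators to `|U|`,
`d(A, C) ≤ 1 - |A ∩ C| / |U| = |U \ (A ∩ C)| / |U|` and `|X ∆ Y| / |U| ≤ d(X, Y)`; in between,
`U \ (A ∩ C) ⊆ A ∆ B ∪ B ∆ C`, since a point of `U` outside `A ∩ C` separates `B` from `A`
or from `C`.
-/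

open Finset
open scoped symmDiff

namespace Finset

variable {α : Type*} [DecidableEq α]

noncomputable def jaccardDist (X Y : Finset α) : ℝ :=
  if X ∪ Y = ∅ then 0 else 1 - ((X ∩ Y).card : ℝ) / (X ∪ Y).card

lemma card_symmDiff_eq_card_union_sub_card_inter (X Y : Finset α) :
    (X ∆ Y).card = (X ∪ Y).card - (X ∩ Y).card := by
  rw [symmDiff_eq_sup_sdiff_inf]
  exact card_sdiff_of_subset inter_subset_union

/-- `0 / 0 = 0` makes this hold also for `X = Y = ∅`. -/
lemma jaccardDist_eq_card_symmDiff_div (X Y : Finset α) :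
    jaccardDist X Y = ((X ∆ Y).card : ℝ) / (X ∪ Y).card := by
  unfold jaccardDist
  split_ifs with hXY
  · simp [hXY]
  · have hpos : (0 : ℝ) < (X ∪ Y).card := by
      exact_mod_cast card_pos.mpr (nonempty_iff_ne_empty.mpr hXY)
    rw [card_symmDiff_eq_card_union_sub_card_inter,
      Nat.cast_sub (card_le_card inter_subset_union)]
    field_simp

lemma card_symmDiff_div_le_jaccardDist {X Y U : Finset α} (hU : X ∪ Y ⊆ U) :
    ((X ∆ Y).card : ℝ) / U.card ≤ jaccardDist X Y := by
  rw [jaccardDist_eq_card_symmDiff_div]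
  rcases (X ∪ Y).eq_empty_or_nonempty with hXY | hXY
  · obtain ⟨rfl, rfl⟩ := union_eq_empty.mp hXY
    simp
  · exact div_le_div_of_nonneg_left (by positivity) (by exact_mod_cast hXY.card_pos)
      (by exact_mod_cast card_le_card hU)

lemma jaccardDist_le_card_sdiff_inter_div {X Y U : Finset α} (hU : X ∪ Y ⊆ U) :
    jaccardDist X Y ≤ ((U \ (X ∩ Y)).card : ℝ) / U.card := by
  unfold jaccardDist
  split_ifs with hXY
  · positivity
  · have hXYpos : (0 : ℝ) < (X ∪ Y).card := by
      exact_mod_cast card_pos.mpr (nonempty_iff_ne_empty.mpr hXY)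
    have hUpos : (0 : ℝ) < U.card := hXYpos.trans_le (by exact_mod_cast card_le_card hU)
    have hinter : X ∩ Y ⊆ U := inter_subset_union.trans hU
    calc 1 - ((X ∩ Y).card : ℝ) / (X ∪ Y).card
        ≤ 1 - ((X ∩ Y).card : ℝ) / U.card := by
          gcongr
      _ = ((U \ (X ∩ Y)).card : ℝ) / U.card := by
          rw [card_sdiff_of_subset hinter, Nat.cast_sub (card_le_card hinter), sub_div,
            div_self hUpos.ne']

lemma union_union_sdiff_inter_subset_symmDiff_union_symmDiff (A B C : Finset α) :
    (A ∪ B ∪ C) \ (A ∩ C) ⊆ A ∆ B ∪ B ∆ C := by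
  intro x
  simp only [mem_sdiff, mem_union, mem_inter, mem_symmDiff]
  tauto

end Finset

/-- The Jaccard distance d(A,B) = 1 − |A∩B|/|A∪B| (with d(∅,∅) = 0)
    satisfies the triangle inequality. -/
theorem jaccard_distance_triangle {α : Type*} [DecidableEq α] (A B C : Finset α) :
    let d : Finset α → Finset α → ℝ := fun X Y =>
      if X ∪ Y = ∅ then 0 else 1 - ((X ∩ Y).card : ℝ) / (X ∪ Y).card
    d A C ≤ d A B + d B C := by
  show jaccardDist A C ≤ jaccardDist A B + jaccardDist B C
  set U := A ∪ B ∪ C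
  calc jaccardDist A C
      ≤ ((U \ (A ∩ C)).card : ℝ) / U.card :=
        jaccardDist_le_card_sdiff_inter_div
          (union_subset (subset_union_left.trans subset_union_left) subset_union_right)
    _ ≤ (((A ∆ B).card + (B ∆ C).card : ℕ) : ℝ) / U.card := by
        gcongr
        exact (card_le_card (union_union_sdiff_inter_subset_symmDiff_union_symmDiff A B C)).trans
          (card_union_le _ _)
    _ = ((A ∆ B).card : ℝ) / U.card + ((B ∆ C).card : ℝ) / U.card := by
        rw [Nat.cast_add, add_div]
    _ ≤ jaccardDist A B + jaccardDist B C :=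
        add_le_add (card_symmDiff_div_le_jaccardDist subset_union_left)
          (card_symmDiff_div_le_jaccardDist
            (union_subset (subset_union_right.trans subset_union_left) subset_union_right))
end
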